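/- Let c > 1, and for each sufficiently small γ > 0 let z*_{c,γ} denote the unique positive solution of ψ₁(z) = c·ψ₁(z + γ). Then lim_{γ → 0+} z*_{c,γ} / γ = 1/(√c − 1). -/

import Mathlib

/-!
On `(0, ∞)` the trigamma function is the series `S x = ∑ₖ 1 / (x + k)²`: differentiate the Gauss
limit `logGammaSeq` of `log Γ` twice, the derivatives converging locally uniformly. Comparing the
series term by term gives `S z ≤ ((z + γ) / z)² S (z + γ)`, so `S z = c S (z + γ)` forces
`√c z ≤ z + γ`, that is `z / γ ≤ 1 / (√c - 1)`. Conversely `S x = 1 / x² + S (x + 1)` with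
`S (x + 1) ≤ S 1` says that `S z` and `c S (z + γ)` agree with `1 / z²` and `c / (z + γ)²` up to
`O(1)`, whence `z + γ - √c z = O(z² (z + γ)) = O(γ³)` and `z / γ ≥ 1 / (√c - 1) - O(γ²)`.
-/

open Filter

/-- The digamma function `ψ(x) = (d/dx) log Γ(x)`. -/
noncomputable def digamma (x : ℝ) : ℝ := deriv (fun y => Real.log (Real.Gamma y)) x

/-- The trigamma function `ψ₁ = ψ'`. -/
noncomputable def trigamma : ℝ → ℝ := deriv digamma

open Real Set Finset Topology BohrMollerup
open scoped Nat

noncomputable def trigammaSeries (x : ℝ) : ℝ := ∑' k : ℕ, 1 / (x + k) ^ 2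

section TrigammaSeries

variable {x y : ℝ}

theorem summable_one_div_add_natCast_sq (x : ℝ) : Summable fun k : ℕ => 1 / (x + k) ^ 2 := by
  refine ((summable_one_div_nat_add_rpow x 2).mpr one_lt_two).congr fun k => ?_
  rw [rpow_two, sq_abs, add_comm]

theorem trigammaSeries_nonneg (x : ℝ) : 0 ≤ trigammaSeries x :=
  tsum_nonneg fun _ => by positivity

theorem trigammaSeries_eq_one_div_sq_add (x : ℝ) :
    trigammaSeries x = 1 / x ^ 2 + trigammaSeries (x + 1) := by
  rw [trigammaSeries, (summable_one_div_add_natCast_sq x).tsum_eq_zero_add, trigammaSeries]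
  simp only [Nat.cast_zero, add_zero, Nat.cast_add, Nat.cast_one, add_assoc, add_comm (1 : ℝ)]

theorem one_div_sq_le_trigammaSeries (x : ℝ) : 1 / x ^ 2 ≤ trigammaSeries x := by
  rw [trigammaSeries_eq_one_div_sq_add]
  exact le_add_of_nonneg_right (trigammaSeries_nonneg _)

theorem trigammaSeries_pos (hx : x ≠ 0) : 0 < trigammaSeries x :=
  (by positivity : (0 : ℝ) < 1 / x ^ 2).trans_le (one_div_sq_le_trigammaSeries x)

theorem trigammaSeries_antitoneOn : AntitoneOn trigammaSeries (Ioi 0) := by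
  intro x hx y _ hxy
  refine (summable_one_div_add_natCast_sq y).tsum_le_tsum (fun k => ?_)
    (summable_one_div_add_natCast_sq x)
  have : 0 < x + k := add_pos_of_pos_of_nonneg hx k.cast_nonneg
  gcongr

theorem trigammaSeries_le_sq_div_mul (hx : 0 < x) (hxy : x ≤ y) :
    trigammaSeries x ≤ (y / x) ^ 2 * trigammaSeries y := by
  rw [trigammaSeries, trigammaSeries, ← tsum_mul_left]
  refine (summable_one_div_add_natCast_sq x).tsum_le_tsum (fun k => ?_)
    ((summable_one_div_add_natCast_sq y).mul_left _)
  have hk : (0 : ℝ) ≤ k := k.cast_nonneg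
  have hy : 0 < y := hx.trans_le hxy
  have key : x * (y + k) ≤ y * (x + k) := by nlinarith
  rw [div_pow, div_mul_div_comm, mul_one, div_le_div_iff₀ (by positivity) (by positivity),
    one_mul, ← mul_pow, ← mul_pow]
  exact pow_le_pow_left₀ (by positivity) key 2

end TrigammaSeries

noncomputable def digammaSeq (n : ℕ) (x : ℝ) : ℝ := log n - ∑ k ∈ range (n + 1), 1 / (x + k)

noncomputable def digammaSeries (x : ℝ) : ℝ :=
  -eulerMascheroniConstant - 1 / x + ∑' k : ℕ, (1 / (k + 1) - 1 / (x + k + 1))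

section SeriesRepresentation

variable {x : ℝ}

theorem hasDerivAt_logGammaSeq (hx : 0 < x) (n : ℕ) :
    HasDerivAt (logGammaSeq · n) (digammaSeq n x) x := by
  have hlog : ∀ k ∈ range (n + 1), HasDerivAt (fun y : ℝ => log (y + k)) (1 / (x + k)) x :=
    fun k _ => by
      simpa [one_div] using ((hasDerivAt_id x).add_const (k : ℝ)).log (by positivity)
  have := (((hasDerivAt_id x).mul_const (log n)).add_const (log (n !))).fun_sub
    (HasDerivAt.fun_sum hlog)
  simpa [digammaSeq, logGammaSeq] using this

theorem hasDerivAt_digammaSeq (hx : 0 < x) (n : ℕ) :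
    HasDerivAt (digammaSeq n) (∑ k ∈ range (n + 1), 1 / (x + k) ^ 2) x := by
  have hinv : ∀ k ∈ range (n + 1), HasDerivAt (fun y : ℝ => 1 / (y + k)) (-(1 / (x + k) ^ 2)) x :=
    fun k _ => by
      simpa [one_div, neg_div, Pi.inv_def] using
        ((hasDerivAt_id x).add_const (k : ℝ)).inv (by positivity)
  unfold digammaSeq
  simpa using (HasDerivAt.fun_sum hinv).const_sub (log n)

theorem tendstoLocallyUniformlyOn_Ioi_of_forall_Ioo {ι β : Type*} [UniformSpace β]
    {p : Filter ι} {F : ι → ℝ → β} {f : ℝ → β}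
    (h : ∀ a b : ℝ, 0 < a → TendstoUniformlyOn F f p (Ioo a b)) :
    TendstoLocallyUniformlyOn F f p (Ioi 0) :=
  tendstoLocallyUniformlyOn_of_forall_exists_nhds fun x hx =>
    ⟨Ioo (x / 2) (x + 1), mem_nhdsWithin_of_mem_nhds
      (Ioo_mem_nhds (half_lt_self hx) (lt_add_one x)), h _ _ (half_pos hx)⟩

theorem digammaSeq_eq (n : ℕ) (x : ℝ) :
    digammaSeq n x = (log n - harmonic n) +
      (-(1 / x) + ∑ k ∈ range n, (1 / ((k : ℝ) + 1) - 1 / (x + k + 1))) := by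
  simp only [digammaSeq, sum_range_succ', harmonic, sum_sub_distrib]
  push_cast
  ring_nf

theorem tendstoLocallyUniformlyOn_digammaSeq :
    TendstoLocallyUniformlyOn digammaSeq digammaSeries atTop (Ioi 0) := by
  refine tendstoLocallyUniformlyOn_Ioi_of_forall_Ioo fun a b ha => ?_
  have hconst : TendstoUniformlyOn (fun (n : ℕ) (_ : ℝ) => log n - (harmonic n : ℝ))
      (fun _ => -eulerMascheroniConstant) atTop (Ioo a b) :=
    (tendsto_harmonic_sub_log.neg.congr fun n => by ring).tendstoUniformlyOn_const _
  have hpole : TendstoUniformlyOn (fun (_ : ℕ) (x : ℝ) => -(1 / x)) (fun x => -(1 / x))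
      atTop (Ioo a b) :=
    fun u hu => Eventually.of_forall fun _ _ _ => refl_mem_uniformity hu
  have hseries : TendstoUniformlyOn
      (fun n (x : ℝ) => ∑ k ∈ range n, (1 / ((k : ℝ) + 1) - 1 / (x + k + 1)))
      (fun x => ∑' k : ℕ, (1 / ((k : ℝ) + 1) - 1 / (x + k + 1))) atTop (Ioo a b) := by
    refine tendstoUniformlyOn_tsum_nat ((summable_one_div_add_natCast_sq 1).mul_left b)
      fun k x ⟨hax, hxb⟩ => ?_
    have hx : 0 < x := ha.trans hax
    have hk : (0 : ℝ) ≤ k := k.cast_nonneg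
    have hterm : 1 / ((k : ℝ) + 1) - 1 / (x + k + 1) = x / ((k + 1) * (x + k + 1)) := by
      field_simp
      ring
    rw [hterm, norm_of_nonneg (by positivity), add_comm (1 : ℝ), mul_one_div, sq]
    gcongr <;> linarith
  refine ((hconst.add (hpole.add hseries)).congr (Eventually.of_forall fun n x _ => ?_))
    |>.congr_right fun x _ => ?_
  · simp only [Pi.add_apply, digammaSeq_eq]
  · simp only [Pi.add_apply, digammaSeries]
    ring

theorem tendstoLocallyUniformlyOn_sum_one_div_add_sq :
    TendstoLocallyUniformlyOn (fun n (x : ℝ) => ∑ k ∈ range (n + 1), 1 / (x + k) ^ 2)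
      trigammaSeries atTop (Ioi 0) := by
  refine tendstoLocallyUniformlyOn_Ioi_of_forall_Ioo fun a b ha => ?_
  have h := tendstoUniformlyOn_tsum_nat (f := fun k (x : ℝ) => 1 / (x + k) ^ 2)
    (summable_one_div_add_natCast_sq a) (s := Ioo a b) fun k x ⟨hax, _⟩ => by
      rw [norm_of_nonneg (by positivity)]
      gcongr
  exact fun u hu => (tendsto_add_atTop_nat 1).eventually (h u hu)

theorem hasDerivAt_log_Gamma (hx : 0 < x) :
    HasDerivAt (fun y => log (Gamma y)) (digammaSeries x) x :=
  hasDerivAt_of_tendstoLocallyUniformlyOn (f := fun n y => logGammaSeq y n) isOpen_Ioi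
    tendstoLocallyUniformlyOn_digammaSeq
    (Eventually.of_forall fun n _ hy => hasDerivAt_logGammaSeq hy n)
    (fun _ hy => tendsto_log_gamma hy) hx

theorem hasDerivAt_digammaSeries (hx : 0 < x) :
    HasDerivAt digammaSeries (trigammaSeries x) x :=
  hasDerivAt_of_tendstoLocallyUniformlyOn isOpen_Ioi tendstoLocallyUniformlyOn_sum_one_div_add_sq
    (Eventually.of_forall fun n _ hy => hasDerivAt_digammaSeq hy n)
    (fun _ hy => tendstoLocallyUniformlyOn_digammaSeq.tendsto_at hy) hx

theorem trigamma_eq_trigammaSeries (hx : 0 < x) : trigamma x = trigammaSeries x := by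
  have h : digamma =ᶠ[𝓝 x] digammaSeries :=
    eventually_of_mem (isOpen_Ioi.mem_nhds hx) fun y hy => (hasDerivAt_log_Gamma hy).deriv
  rw [trigamma, h.deriv_eq, (hasDerivAt_digammaSeries hx).deriv]

end SeriesRepresentation

section RatioEquation

variable {c s z t γ C : ℝ}

theorem sqrt_mul_le_of_trigammaSeries_eq (hz : 0 < z) (hzt : z ≤ t)
    (h : trigammaSeries z = c * trigammaSeries t) : √c * z ≤ t := by
  have hc : c ≤ (t / z) ^ 2 := by
    refine le_of_mul_le_mul_right ?_ (trigammaSeries_pos (hz.trans_le hzt).ne')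
    rw [← h]
    exact trigammaSeries_le_sq_div_mul hz hzt
  have : √c ≤ t / z := by
    simpa [sqrt_sq (div_nonneg (hz.le.trans hzt) hz.le)] using sqrt_le_sqrt hc
  rwa [le_div_iff₀ hz] at this

theorem sub_sqrt_mul_le_of_trigammaSeries_eq (hc : 0 ≤ c) (hz : 0 < z) (hzt : z ≤ t)
    (h : trigammaSeries z = c * trigammaSeries t) :
    t - √c * z ≤ c * trigammaSeries 1 * z ^ 2 * t := by
  have ht : 0 < t := hz.trans_le hzt
  have hshift : trigammaSeries (t + 1) ≤ trigammaSeries 1 :=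
    trigammaSeries_antitoneOn (show (0 : ℝ) < 1 from one_pos) (show 0 < t + 1 by positivity)
      (by linarith)
  have hsq : t ^ 2 ≤ c * z ^ 2 + c * trigammaSeries 1 * z ^ 2 * t ^ 2 := by
    have hle : 1 / z ^ 2 ≤ c * (1 / t ^ 2 + trigammaSeries 1) := by
      calc 1 / z ^ 2 ≤ trigammaSeries z := one_div_sq_le_trigammaSeries z
        _ = c * (1 / t ^ 2 + trigammaSeries (t + 1)) := by
          rw [h, trigammaSeries_eq_one_div_sq_add t]
        _ ≤ c * (1 / t ^ 2 + trigammaSeries 1) := by gcongr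
    rw [div_le_iff₀ (by positivity)] at hle
    have := mul_le_mul_of_nonneg_right hle (sq_nonneg t)
    field_simp at this
    linarith
  have hnonneg : 0 ≤ t - √c * z := sub_nonneg.mpr (sqrt_mul_le_of_trigammaSeries_eq hz hzt h)
  have hprod : (t - √c * z) * t ≤ c * trigammaSeries 1 * z ^ 2 * t * t := by
    calc (t - √c * z) * t ≤ (t - √c * z) * (t + √c * z) := by
          gcongr
          linarith [mul_nonneg (sqrt_nonneg c) hz.le]
      _ = t ^ 2 - c * z ^ 2 := by linear_combination (-z ^ 2) * sq_sqrt hc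
      _ ≤ c * trigammaSeries 1 * z ^ 2 * t * t := by linarith
  exact le_of_mul_le_mul_right hprod ht

theorem div_le_one_div_sub_one (hs : 1 < s) (hγ : 0 < γ) (h : s * z ≤ z + γ) :
    z / γ ≤ 1 / (s - 1) := by
  rw [div_le_div_iff₀ hγ (sub_pos.mpr hs)]
  linarith

theorem one_div_sub_one_sub_le_div (hs : 1 < s) (hz : 0 < z) (hγ : 0 < γ) (hC : 0 ≤ C)
    (hup : s * z ≤ z + γ) (h : z + γ - s * z ≤ C * z ^ 2 * (z + γ)) :
    1 / (s - 1) - C * (1 / (s - 1)) ^ 3 * (1 / (s - 1) + 1) * γ ^ 2 ≤ z / γ := by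
  set a := 1 / (s - 1) with ha_def
  have ha : a * (s - 1) = 1 := by rw [ha_def]; field_simp [(sub_pos.mpr hs).ne']
  have ha0 : 0 < a := one_div_pos.mpr (sub_pos.mpr hs)
  have hza : z ≤ a * γ := by nlinarith
  have hR : z + γ - s * z ≤ C * a ^ 2 * (a + 1) * γ ^ 3 := h.trans (by
    have : z ^ 2 * (z + γ) ≤ (a * γ) ^ 2 * (a * γ + γ) := by gcongr
    nlinarith)
  rw [le_div_iff₀ hγ]
  nlinarith [mul_le_mul_of_nonneg_left hR ha0.le]

end RatioEquation

/-- If, for each sufficiently small `γ > 0`, `zstar γ` is a (the unique) positive solution of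
`ψ₁(z) = c·ψ₁(z + γ)`, then `zstar γ / γ → 1/(√c - 1)` as `γ → 0+`. -/
theorem critical_point_asymptotics (c : ℝ) (hc : 1 < c)
    (γ₀ : ℝ) (hγ₀ : 0 < γ₀) (zstar : ℝ → ℝ)
    (hz : ∀ γ : ℝ, 0 < γ → γ < γ₀ →
      0 < zstar γ ∧ trigamma (zstar γ) = c * trigamma (zstar γ + γ)) :
    Tendsto (fun γ => zstar γ / γ) (nhdsWithin 0 (Set.Ioi 0))
      (nhds (1 / (Real.sqrt c - 1))) := by
  set a := 1 / (√c - 1)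
  set C := c * trigammaSeries 1
  have hs : 1 < √c := by simpa using sqrt_lt_sqrt zero_le_one hc
  have hC : 0 ≤ C := mul_nonneg (by linarith) (trigammaSeries_nonneg 1)
  have hbounds : ∀ᶠ γ in 𝓝[>] 0, a - C * a ^ 3 * (a + 1) * γ ^ 2 ≤ zstar γ / γ ∧
      zstar γ / γ ≤ a := by
    filter_upwards [Ioo_mem_nhdsGT hγ₀] with γ ⟨hγ, hγγ₀⟩
    obtain ⟨hz0, heq⟩ := hz γ hγ hγγ₀
    rw [trigamma_eq_trigammaSeries hz0, trigamma_eq_trigammaSeries (by positivity)] at heq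
    have hle : zstar γ ≤ zstar γ + γ := by linarith
    have hup := sqrt_mul_le_of_trigammaSeries_eq hz0 hle heq
    exact ⟨one_div_sub_one_sub_le_div hs hz0 hγ hC hup
        (sub_sqrt_mul_le_of_trigammaSeries_eq (by linarith) hz0 hle heq),
      div_le_one_div_sub_one hs hγ hup⟩
  have hlower : Tendsto (fun γ => a - C * a ^ 3 * (a + 1) * γ ^ 2) (𝓝[>] 0) (𝓝 a) := by
    have hcont : Continuous fun γ : ℝ => a - C * a ^ 3 * (a + 1) * γ ^ 2 := by fun_prop
    convert tendsto_nhdsWithin_of_tendsto_nhds (hcont.tendsto 0) using 2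
    ring
  exact tendsto_of_tendsto_of_tendsto_of_le_of_le' hlower tendsto_const_nhds
    (hbounds.mono fun _ h => h.1) (hbounds.mono fun _ h => h.2)
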